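/- Cartan's second Bianchi identity: for all indices a,b and all smooth vector fields X,Y,Z, dΩ^a_b(X,Y,Z) + Σ_c (ω^a_c ∧ Ω^c_b)(X,Y,Z) = Σ_c (Ω^a_c ∧ ω^c_b)(X,Y,Z). -/

import Mathlib

open scoped Manifold

local notation "∞" => (⊤ : ℕ∞)

noncomputable section

variable {E : Type*} [NormedAddCommGroup E] [NormedSpace ℝ E]
  {H : Type*} [TopologicalSpace H]

/-- A linear connection on the smooth manifold `M`, given as an operator on global smooth
vector fields (realised as derivations of the algebra `C^∞(M)` of smooth real-valued
functions) which is ℝ-bilinear, `C^∞(M)`-linear in its first argument and satisfies the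
Leibniz rule `∇_X (f • Y) = X f • Y + f • ∇_X Y` in its second argument. -/
structure LinearConnection (I : ModelWithCorners ℝ E H) (M : Type*) [TopologicalSpace M]
    [ChartedSpace H M] [IsManifold I ∞ M] where
  cov : Derivation ℝ C^∞⟮I, M; ℝ⟯ C^∞⟮I, M; ℝ⟯ →
        Derivation ℝ C^∞⟮I, M; ℝ⟯ C^∞⟮I, M; ℝ⟯ →
        Derivation ℝ C^∞⟮I, M; ℝ⟯ C^∞⟮I, M; ℝ⟯
  add_left : ∀ X X' Y, cov (X + X') Y = cov X Y + cov X' Y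
  smul_real_left : ∀ (r : ℝ) (X Y), cov (r • X) Y = r • cov X Y
  smul_smooth_left : ∀ (f : C^∞⟮I, M; ℝ⟯) (X Y), cov (f • X) Y = f • cov X Y
  add_right : ∀ X Y Y', cov X (Y + Y') = cov X Y + cov X Y'
  smul_real_right : ∀ (r : ℝ) (X Y), cov X (r • Y) = r • cov X Y
  leibniz : ∀ (f : C^∞⟮I, M; ℝ⟯) (X Y), cov X (f • Y) = X f • Y + f • cov X Y

variable {I : ModelWithCorners ℝ E H}
  {M : Type*} [TopologicalSpace M] [ChartedSpace H M] [IsManifold I ∞ M]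

/-- Smooth real-valued functions on `M`. -/
local notation "Cinf" => C^∞⟮I, M; ℝ⟯
/-- Smooth global vector fields on `M`, as derivations of `C^∞(M)`. -/
local notation "VF" => Derivation ℝ C^∞⟮I, M; ℝ⟯ C^∞⟮I, M; ℝ⟯

namespace LinearConnection

variable (nab : LinearConnection I M)

/-- The torsion `T(X,Y) := ∇_X Y − ∇_Y X − [X,Y]` of a linear connection. -/
def torsion (X Y : VF) : VF := nab.cov X Y - nab.cov Y X - ⁅X, Y⁆

/-- The curvature `R(X,Y)Z := ∇_X ∇_Y Z − ∇_Y ∇_X Z − ∇_{[X,Y]} Z` of a linear connection. -/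
def curv (X Y Z : VF) : VF :=
  nab.cov X (nab.cov Y Z) - nab.cov Y (nab.cov X Z) - nab.cov ⁅X, Y⁆ Z

/-- The covariant derivative along `X` of a scalar-valued map of one vector field
argument (e.g. a 1-form): `(∇_X θ)(Y) := X(θ(Y)) − θ(∇_X Y)`. -/
def covOne (X : VF) (θ : VF → Cinf) : VF → Cinf :=
  fun Y => X (θ Y) - θ (nab.cov X Y)

/-- The covariant derivative `(∇_X T)(Y,Z) := ∇_X(T(Y,Z)) − T(∇_X Y, Z) − T(Y, ∇_X Z)`
of the torsion. -/
def covTorsion (X Y Z : VF) : VF :=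
  nab.cov X (nab.torsion Y Z) - nab.torsion (nab.cov X Y) Z - nab.torsion Y (nab.cov X Z)

/-- The covariant derivative
`(∇_X R)(Y,Z)W := ∇_X(R(Y,Z)W) − R(∇_X Y,Z)W − R(Y,∇_X Z)W − R(Y,Z)(∇_X W)`
of the curvature. -/
def covCurv (X Y Z W : VF) : VF :=
  nab.cov X (nab.curv Y Z W) - nab.curv (nab.cov X Y) Z W - nab.curv Y (nab.cov X Z) W
    - nab.curv Y Z (nab.cov X W)

end LinearConnection

/-- The exterior derivative of a 1-form (given as a bare function on vector fields):
`dα(X,Y) := X(α(Y)) − Y(α(X)) − α([X,Y])`. -/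
def extD1 (α : VF → Cinf) (X Y : VF) : Cinf :=
  X (α Y) - Y (α X) - α ⁅X, Y⁆

/-- The exterior derivative of a 2-form (given as a bare function on vector fields):
`dβ(X,Y,Z) := X(β(Y,Z)) + Y(β(Z,X)) + Z(β(X,Y)) − β([X,Y],Z) − β([Y,Z],X) − β([Z,X],Y)`. -/
def extD2 (β : VF → VF → Cinf) (X Y Z : VF) : Cinf :=
  X (β Y Z) + Y (β Z X) + Z (β X Y) - β ⁅X, Y⁆ Z - β ⁅Y, Z⁆ X - β ⁅Z, X⁆ Y

/-!
The frame-free identity `Σ_cyc (∇_X R(Y,Z) - R([X,Y],Z)) = Σ_cyc R(X,Y) ∇_Z`, which is the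
Jacobi identity for the operators `∇_X` written out, is applied to `U_b` and hit with `θ^a`.
Expanding `V = Σ_c θ^c(V) U_c` under `∇_X` gives `X(θ^a V) = θ^a(∇_X V) - Σ_c ω^a_c(X) θ^c(V)`,
which turns `dΩ^a_b` into the covariant terms plus `-Σ_c ω^a_c ∧ Ω^c_b`; and since `R(X,Y)` is
`C^∞(M)`-linear, `θ^a(R(X,Y) ∇_Z U_b) = Σ_c Ω^a_c(X,Y) ω^c_b(Z)`, which yields `Σ_c Ω^a_c ∧ ω^c_b`.
-/

lemma sum_apply_mul_coframe {R V : Type*} [CommSemiring R] [AddCommMonoid V] [Module R V]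
    {n : ℕ} (U : Fin n → V) (θ : Fin n → V →ₗ[R] R) (hframe : ∀ v, v = ∑ a, θ a v • U a)
    (φ : V →ₗ[R] R) (v : V) :
    ∑ c, φ (U c) * θ c v = φ v := by
  conv_rhs => rw [hframe v]
  simp only [map_sum, map_smul, smul_eq_mul, mul_comm]

namespace LinearConnection

variable (nab : LinearConnection I M)

lemma cov_sub_right (X Y Y' : VF) : nab.cov X (Y - Y') = nab.cov X Y - nab.cov X Y' :=
  map_sub (AddMonoidHom.mk' (nab.cov X) (nab.add_right X)) Y Y'

lemma cov_sum_right {ι : Type*} (X : VF) (s : Finset ι) (V : ι → VF) :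
    nab.cov X (∑ c ∈ s, V c) = ∑ c ∈ s, nab.cov X (V c) :=
  map_sum (AddMonoidHom.mk' (nab.cov X) (nab.add_right X)) V s

lemma cov_neg_left (X Y : VF) : nab.cov (-X) Y = -nab.cov X Y :=
  map_neg (AddMonoidHom.mk' (nab.cov · Y) (nab.add_left · · Y)) X

lemma cov_sub_left (X X' Y : VF) : nab.cov (X - X') Y = nab.cov X Y - nab.cov X' Y :=
  map_sub (AddMonoidHom.mk' (nab.cov · Y) (nab.add_left · · Y)) X X'

lemma curv_add_right (X Y W W' : VF) :
    nab.curv X Y (W + W') = nab.curv X Y W + nab.curv X Y W' := by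
  simp only [curv, nab.add_right]
  abel

lemma curv_smul_right (X Y : VF) (f : Cinf) (W : VF) :
    nab.curv X Y (f • W) = f • nab.curv X Y W := by
  simp only [curv, nab.leibniz, nab.add_right, Derivation.commutator_apply, smul_sub]
  module

def curvLin (X Y : VF) : VF →ₗ[Cinf] VF where
  toFun := nab.curv X Y
  map_add' := nab.curv_add_right X Y
  map_smul' := nab.curv_smul_right X Y

lemma cyclic_cov_curv_sub_curv_lie (X Y Z W : VF) :
    nab.cov X (nab.curv Y Z W) + nab.cov Y (nab.curv Z X W) + nab.cov Z (nab.curv X Y W)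
      - nab.curv ⁅X, Y⁆ Z W - nab.curv ⁅Y, Z⁆ X W - nab.curv ⁅Z, X⁆ Y W =
    nab.curv X Y (nab.cov Z W) + nab.curv Y Z (nab.cov X W)
      + nab.curv Z X (nab.cov Y W) := by
  -- the three terms `∇_{[[X,Y],Z]} W` cancel by the Jacobi identity
  have jacobi : ⁅⁅Z, X⁆, Y⁆ = -⁅⁅X, Y⁆, Z⁆ - ⁅⁅Y, Z⁆, X⁆ := by
    rw [← lie_skew ⁅Z, X⁆ Y, ← lie_skew ⁅X, Y⁆ Z, ← lie_skew ⁅Y, Z⁆ X]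
    linear_combination (norm := abel) -lie_jacobi X Y Z
  simp only [curv, nab.cov_sub_right, jacobi, nab.cov_sub_left, nab.cov_neg_left]
  abel

lemma apply_coframe_eq_coframe_cov_sub {n : ℕ} (U : Fin n → VF)
    (θf : Fin n → (VF →ₗ[Cinf] Cinf))
    (hdual : ∀ a b, θf a (U b) = if a = b then 1 else 0)
    (hframe : ∀ X : VF, X = ∑ a, θf a X • U a) (a : Fin n) (X V : VF) :
    X (θf a V) = θf a (nab.cov X V) - ∑ c, θf a (nab.cov X (U c)) * θf c V := by
  have cov_expand :
      θf a (nab.cov X V) = X (θf a V) + ∑ c, θf c V * θf a (nab.cov X (U c)) := by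
    conv_lhs => rw [hframe V]
    simp only [nab.cov_sum_right, nab.leibniz, map_sum, map_add, map_smul, smul_eq_mul, hdual,
      mul_ite, mul_one, mul_zero, Finset.sum_add_distrib, Finset.sum_ite_eq, Finset.mem_univ,
      if_true]
  simp only [cov_expand, mul_comm]
  ring

end LinearConnection

/-- **Cartan's second Bianchi identity.** For a frame `U_1,…,U_n` with dual coframe
`θ^1,…,θ^n`: `dΩ^a_b + Σ_c ω^a_c ∧ Ω^c_b = Σ_c Ω^a_c ∧ ω^c_b`, where
`ω^a_b(X) := θ^a(∇_X U_b)` and `Ω^a_b(X,Y) := θ^a(R(X,Y)U_b)`,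
`(α ∧ β)(X,Y,Z) := α(X)β(Y,Z) + α(Y)β(Z,X) + α(Z)β(X,Y)` for a 1-form `α` and 2-form `β`,
and `(β ∧ α)(X,Y,Z) := β(X,Y)α(Z) + β(Y,Z)α(X) + β(Z,X)α(Y)`. -/
theorem cartan_second_bianchi (nab : LinearConnection I M) {n : ℕ}
    (U : Fin n → VF) (θf : Fin n → (VF →ₗ[Cinf] Cinf))
    (hdual : ∀ a b, θf a (U b) = if a = b then 1 else 0)
    (hframe : ∀ X : VF, X = ∑ a, θf a X • U a)
    (a b : Fin n) (X Y Z : VF) :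
    extD2 (fun A B => θf a (nab.curv A B (U b))) X Y Z
      + ∑ c, (θf a (nab.cov X (U c)) * θf c (nab.curv Y Z (U b))
          + θf a (nab.cov Y (U c)) * θf c (nab.curv Z X (U b))
          + θf a (nab.cov Z (U c)) * θf c (nab.curv X Y (U b))) =
    ∑ c, (θf a (nab.curv X Y (U c)) * θf c (nab.cov Z (U b))
        + θf a (nab.curv Y Z (U c)) * θf c (nab.cov X (U b))
        + θf a (nab.curv Z X (U c)) * θf c (nab.cov Y (U b))) := by
  have tensorial (X Y V : VF) :
      ∑ c, θf a (nab.curv X Y (U c)) * θf c V = θf a (nab.curv X Y V) :=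
    sum_apply_mul_coframe U θf hframe ((θf a).comp (nab.curvLin X Y)) V
  have bianchi := congrArg (θf a) (nab.cyclic_cov_curv_sub_curv_lie X Y Z (U b))
  simp only [map_add, map_sub] at bianchi
  simp only [extD2, nab.apply_coframe_eq_coframe_cov_sub U θf hdual hframe a,
    Finset.sum_add_distrib, tensorial]
  linear_combination bianchi
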